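/- Let H be a linear map with σₘ ≤ HᵀH ≤ σ_M (eigenvalue bounds), 0 ≤ ρ ≤ σₘ, αρ < 1, and 0 < α < 2/(σ_M + ρ). Define V_α(x) = (1/(1−αρ))(αHᵀy + (I − αHᵀH)x). Then V_α is a β-averaged operator for some β ∈ (0,1). -/

import Mathlib

/-!
With `c = (1 - αρ)⁻¹`, `V x = c α Hᵀy + T x` where `T = c (I - α HᵀH)` is symmetric with
`c (1 - ασ_M) ‖x‖² ≤ ⟪T x, x⟫ ≤ ‖x‖²`; the upper bound is where `ρ ≤ σₘ` enters, and
`c (1 - ασ_M) > -1` is exactly `α (σ_M + ρ) < 2`. For a symmetric `T` with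
`a ‖x‖² ≤ ⟪T x, x⟫ ≤ ‖x‖²` and `1 - 2β ≤ a`, the quadratic form of `S = β⁻¹ (T - (1 - β) I)` lies
between `-‖x‖²` and `‖x‖²`, so `‖S‖ ≤ 1` since the norm of a symmetric operator is the supremum of
its Rayleigh quotient; then `U = β⁻¹ c α Hᵀy + S` is non-expansive.
-/

open Set

def IsAveraged {E : Type*} [NormedAddCommGroup E] [Module ℝ E] (β : ℝ) (V : E → E) : Prop :=
  ∃ U : E → E, LipschitzWith 1 U ∧ ∀ x, V x = (1 - β) • x + β • U x

theorem ContinuousLinearMap.norm_le_of_abs_re_inner_self_le {𝕜 E : Type*} [RCLike 𝕜]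
    [NormedAddCommGroup E] [InnerProductSpace 𝕜 E] {T : E →L[𝕜] E}
    (hT : (T : E →ₗ[𝕜] E).IsSymmetric) {M : ℝ} (hM : 0 ≤ M)
    (h : ∀ x, |RCLike.re (inner 𝕜 (T x) x)| ≤ M * ‖x‖ ^ 2) : ‖T‖ ≤ M := by
  rw [T.norm_eq_iSup_rayleighQuotient hT]
  refine ciSup_le fun x => ?_
  rcases eq_or_ne x 0 with rfl | hx
  · simpa using hM
  · rw [rayleighQuotient, abs_div, abs_sq, div_le_iff₀ (by positivity)]
    exact h x

section Averaged

variable {E : Type*} [NormedAddCommGroup E] [InnerProductSpace ℝ E]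

theorem isAveraged_const_add_of_inner_self_mem_Icc {T : E →L[ℝ] E}
    (hT : (T : E →ₗ[ℝ] E).IsSymmetric) (v : E) {β : ℝ} (hβ : 0 < β)
    (hlo : ∀ x, (1 - 2 * β) * ‖x‖ ^ 2 ≤ inner ℝ (T x) x)
    (hhi : ∀ x, inner ℝ (T x) x ≤ ‖x‖ ^ 2) :
    IsAveraged β (fun x => v + T x) := by
  set S : E →L[ℝ] E := β⁻¹ • (T - (1 - β) • ContinuousLinearMap.id ℝ E)
  have hS : (S : E →ₗ[ℝ] E).IsSymmetric :=
    (hT.sub (LinearMap.IsSymmetric.id.smul (conj_trivial _))).smul (conj_trivial _)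
  have hS_inner (x : E) : inner ℝ (S x) x = β⁻¹ * (inner ℝ (T x) x - (1 - β) * ‖x‖ ^ 2) := by
    simp [S, inner_sub_left, real_inner_smul_left]
  have hS_norm : ‖S‖ ≤ 1 := by
    refine S.norm_le_of_abs_re_inner_self_le hS zero_le_one fun x => ?_
    rw [RCLike.re_to_real, hS_inner, abs_mul, abs_inv, abs_of_pos hβ, inv_mul_le_iff₀ hβ, abs_le]
    constructor <;> linarith [hlo x, hhi x]
  refine ⟨fun x => β⁻¹ • v + S x, ?_, fun x => ?_⟩
  · refine LipschitzWith.of_dist_le_mul fun x z => ?_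
    rw [dist_add_left]
    exact (S.lipschitz.weaken hS_norm).dist_le_mul x z
  · simp only [S, FunLike.coe_smul, FunLike.coe_sub, Pi.smul_apply, Pi.sub_apply,
      ContinuousLinearMap.id_apply, smul_add, smul_smul, mul_inv_cancel₀ hβ.ne', one_smul]
    module

theorem exists_isAveraged_const_add {T : E →L[ℝ] E} (hT : (T : E →ₗ[ℝ] E).IsSymmetric)
    (v : E) {a : ℝ} (ha : -1 < a) (hlo : ∀ x, a * ‖x‖ ^ 2 ≤ inner ℝ (T x) x)
    (hhi : ∀ x, inner ℝ (T x) x ≤ ‖x‖ ^ 2) :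
    ∃ β ∈ Ioo (0 : ℝ) 1, IsAveraged β (fun x => v + T x) := by
  set β := max ((1 - a) / 2) (1 / 2)
  refine ⟨β, ⟨by positivity, max_lt (by linarith) (by norm_num)⟩,
    isAveraged_const_add_of_inner_self_mem_Icc hT v (by positivity) (fun x => ?_) hhi⟩
  have h2β : 1 - 2 * β ≤ a := by linarith [le_max_left ((1 - a) / 2) (1 / 2)]
  exact (mul_le_mul_of_nonneg_right h2β (sq_nonneg ‖x‖)).trans (hlo x)

end Averaged

theorem gradient_step_quadratic_averaged_general
    (n m : ℕ)
    (H : EuclideanSpace ℝ (Fin n) →ₗ[ℝ] EuclideanSpace ℝ (Fin m))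
    (y : EuclideanSpace ℝ (Fin m))
    (σm σM ρ α : ℝ)
    (heig_lo : ∀ x : EuclideanSpace ℝ (Fin n), σm * ‖x‖ ^ 2 ≤ (inner ℝ (H x) (H x) : ℝ))
    (heig_hi : ∀ x : EuclideanSpace ℝ (Fin n), (inner ℝ (H x) (H x) : ℝ) ≤ σM * ‖x‖ ^ 2)
    (hρσ : ρ ≤ σm)
    (hα : 0 < α) (hαρ : α * ρ < 1) (hα2 : α < 2 / (σM + ρ))
    (V : EuclideanSpace ℝ (Fin n) → EuclideanSpace ℝ (Fin n))
    (hV : ∀ x, V x = (1 / (1 - α * ρ)) •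
        (α • ((LinearMap.adjoint H) y) + (x - α • (LinearMap.adjoint H) (H x)))) :
    ∃ β ∈ Ioo (0 : ℝ) 1, ∃ U : EuclideanSpace ℝ (Fin n) → EuclideanSpace ℝ (Fin n),
      LipschitzWith 1 U ∧ ∀ x, V x = (1 - β) • x + β • U x := by
  have hd : 0 < 1 - α * ρ := by linarith
  have hσMρ : 0 < σM + ρ := by
    by_contra! h
    linarith [div_nonpos_of_nonneg_of_nonpos zero_le_two h]
  have hαM : α * (σM + ρ) < 2 := (lt_div_iff₀ hσMρ).mp hα2
  set T := LinearMap.toContinuousLinearMap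
    ((1 - α * ρ)⁻¹ • (LinearMap.id - α • (LinearMap.adjoint H ∘ₗ H)))
  have hT : (T : EuclideanSpace ℝ (Fin n) →ₗ[ℝ] EuclideanSpace ℝ (Fin n)).IsSymmetric := by
    simpa [T] using ((LinearMap.IsSymmetric.id.sub
      ((LinearMap.isSymmetric_adjoint_comp_self H).smul (conj_trivial α))).smul
        (conj_trivial (1 - α * ρ)⁻¹))
  have hT_inner (x) : inner ℝ (T x) x = (‖x‖ ^ 2 - α * inner ℝ (H x) (H x)) / (1 - α * ρ) := by
    simp [T, inner_sub_left, real_inner_smul_left, LinearMap.adjoint_inner_left, div_eq_inv_mul]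
  have hV_affine : V = fun x => (1 - α * ρ)⁻¹ • α • LinearMap.adjoint H y + T x := by
    ext1 x
    simp [hV, T, smul_add]
  rw [hV_affine]
  refine exists_isAveraged_const_add hT _ (a := (1 - α * σM) / (1 - α * ρ)) ?_
    (fun x => ?_) (fun x => ?_)
  · rw [lt_div_iff₀ hd]; linarith
  · rw [hT_inner, div_mul_eq_mul_div]
    gcongr
    nlinarith [heig_hi x]
  · rw [hT_inner, div_le_iff₀ hd]
    nlinarith [heig_lo x, mul_le_mul_of_nonneg_right hρσ (sq_nonneg ‖x‖)]

theorem gradient_step_quadratic_averaged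
    (n m : ℕ)
    (H : EuclideanSpace ℝ (Fin n) →ₗ[ℝ] EuclideanSpace ℝ (Fin m))
    (y : EuclideanSpace ℝ (Fin m))
    (σm σM ρ α : ℝ)
    (heig_lo : ∀ x : EuclideanSpace ℝ (Fin n), σm * ‖x‖ ^ 2 ≤ (inner ℝ (H x) (H x) : ℝ))
    (heig_hi : ∀ x : EuclideanSpace ℝ (Fin n), (inner ℝ (H x) (H x) : ℝ) ≤ σM * ‖x‖ ^ 2)
    (hρ0 : 0 ≤ ρ) (hρσ : ρ ≤ σm)
    (hα : 0 < α) (hαρ : α * ρ < 1) (hα2 : α < 2 / (σM + ρ))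
    (V : EuclideanSpace ℝ (Fin n) → EuclideanSpace ℝ (Fin n))
    (hV : ∀ x, V x = (1 / (1 - α * ρ)) •
        (α • ((LinearMap.adjoint H) y) + (x - α • (LinearMap.adjoint H) (H x)))) :
    ∃ β ∈ Ioo (0 : ℝ) 1, ∃ U : EuclideanSpace ℝ (Fin n) → EuclideanSpace ℝ (Fin n),
      LipschitzWith 1 U ∧ ∀ x, V x = (1 - β) • x + β • U x :=
  gradient_step_quadratic_averaged_general n m H y σm σM ρ α heig_lo heig_hi hρσ hα hαρ hα2 V hV
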